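/- arXiv:2103.08847 — 5 statements merged into one kernel-verified Lean document; each statement's English description precedes it below -/
import Mathlib

section
/- For every measurable function f : (0,∞) → ℝ and every s ∈ (0,1], with (C*|f|)(s) = ∫_s^∞ |f(u)|/u du, one has ∫_0^1 (C*|f|)(s) ds ≤ 2 ∫_0^∞ μ(u,f)/(1+u) du, where both sides take values in [0,∞]. (Consequently the dual Cesàro operator C* maps the Lorentz space Λ_log(0,∞) = {f : ∫_0^∞ μ(u,f)/(1+u) du < ∞} boundedly into (L₁+L∞)(0,∞).) -/
/-!
Integrating `C*|f|` over `(0,1]` and exchanging the integrals gives `∫_0^∞ |f(u)| w(u) du`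
with the decreasing weight `w(u) = min(1, 1/u) ≤ 2/(1+u)`. It remains to prove the
Hardy–Littlewood inequality `∫_0^∞ |f| w ≤ ∫_0^∞ μ(t,f) w(t) dt`. By the layer cake formula,
`∫ |f| w = ∫_0^∞ (∫_{|f|>s} w) ds`; since `w` decreases, `∫_{|f|>s} w ≤ ∫_0^{D(s)} w` with
`D(s) = |{|f| > s}|`. Exchanging the integrals once more leaves `∫_0^∞ w(t) |{s : D(s) > t}| dt`,
and `|{s > 0 : D(s) > t}| ≤ μ(t,f)` because `D` is decreasing.
-/

open MeasureTheory ENNReal Set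

/-- The decreasing rearrangement `μ(t, f)` of a measurable function `f` with respect to a
measure `ν`: `μ(t,f) = inf {s ≥ 0 : ν({|f| > s}) ≤ t}`, with values in `[0,∞]`
(the infimum of the empty set being `∞`). -/
noncomputable def mu {X : Type*} [MeasurableSpace X] (ν : Measure X) (f : X → ℝ) (t : ℝ) : ℝ≥0∞ :=
  sInf (ENNReal.ofReal '' {s : ℝ | 0 ≤ s ∧ ν {u | s < |f u|} ≤ ENNReal.ofReal t})

section Bathtub

variable {α : Type*} [MeasurableSpace α] {μ : Measure α} {f : α → ℝ≥0∞} {A B : Set α}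

lemma setLIntegral_le_setLIntegral_of_measure_sdiff_le (hA : MeasurableSet A)
    (hB : MeasurableSet B) (c : ℝ≥0∞) (hμ : μ (A \ B) ≤ μ (B \ A))
    (hfA : ∀ x ∈ A \ B, f x ≤ c) (hfB : ∀ x ∈ B \ A, c ≤ f x) :
    ∫⁻ x in A, f x ∂μ ≤ ∫⁻ x in B, f x ∂μ := by
  calc ∫⁻ x in A, f x ∂μ = ∫⁻ x in A ∩ B, f x ∂μ + ∫⁻ x in A \ B, f x ∂μ :=
        (lintegral_inter_add_sdiff f A hB).symm
    _ ≤ ∫⁻ x in A ∩ B, f x ∂μ + ∫⁻ _ in A \ B, c ∂μ := by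
        gcongr _ + ?_; exact setLIntegral_mono' (hA.diff hB) hfA
    _ ≤ ∫⁻ x in B ∩ A, f x ∂μ + ∫⁻ _ in B \ A, c ∂μ := by
        rw [inter_comm, setLIntegral_const, setLIntegral_const]; gcongr
    _ ≤ ∫⁻ x in B ∩ A, f x ∂μ + ∫⁻ x in B \ A, f x ∂μ := by
        gcongr _ + ?_; exact setLIntegral_mono' (hB.diff hA) hfB
    _ = ∫⁻ x in B, f x ∂μ := lintegral_inter_add_sdiff f B hA

end Bathtub

section Tonelli

variable {α β : Type*} [MeasurableSpace α] [MeasurableSpace β] {μ : Measure α} {ν : Measure β}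
  [SFinite μ] [SFinite ν]

lemma lintegral_setLIntegral_preimage_swap {S : Set (α × β)} (hS : MeasurableSet S)
    {w : β → ℝ≥0∞} (hw : Measurable w) :
    ∫⁻ x, ∫⁻ y in Prod.mk x ⁻¹' S, w y ∂ν ∂μ = ∫⁻ y, μ ((·, y) ⁻¹' S) * w y ∂ν := by
  have hF : Measurable (S.indicator fun p => w p.2) := (hw.comp measurable_snd).indicator hS
  calc ∫⁻ x, ∫⁻ y in Prod.mk x ⁻¹' S, w y ∂ν ∂μ
        = ∫⁻ x, ∫⁻ y, S.indicator (fun p => w p.2) (x, y) ∂ν ∂μ := by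
        congr! 2 with x
        rw [← lintegral_indicator (measurable_prodMk_left hS)]
        rfl
    _ = ∫⁻ y, ∫⁻ x, S.indicator (fun p => w p.2) (x, y) ∂μ ∂ν :=
        lintegral_lintegral_swap hF.aemeasurable
    _ = ∫⁻ y, μ ((·, y) ⁻¹' S) * w y ∂ν := by
        congr! 2 with y
        rw [mul_comm, ← lintegral_indicator_const (measurable_prodMk_right hS)]
        rfl

end Tonelli

lemma setLIntegral_le_setLIntegral_Ioo_of_antitone {w : ℝ → ℝ≥0∞} (hw : Antitone w)
    {A : Set ℝ} (hA : MeasurableSet A) (hA0 : A ⊆ Ioi 0) {T : ℝ}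
    (hT : volume A = ENNReal.ofReal T) :
    ∫⁻ u in A, w u ≤ ∫⁻ u in Ioo 0 T, w u := by
  have hvol : volume A = volume (Ioo 0 T) := by rw [hT, Real.volume_Ioo, sub_zero]
  have hfin : volume (A ∩ Ioo 0 T) ≠ ∞ :=
    ((measure_mono inter_subset_right).trans_lt measure_Ioo_lt_top).ne
  refine setLIntegral_le_setLIntegral_of_measure_sdiff_le hA measurableSet_Ioo (w T)
    (measure_sdiff_symm hA.nullMeasurableSet measurableSet_Ioo.nullMeasurableSet hvol hfin).le
    ?_ ?_
  · rintro u ⟨hu, huT⟩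
    exact hw (le_of_not_gt fun h => huT ⟨hA0 hu, h⟩)
  · rintro u ⟨hu, -⟩
    exact hw hu.2.le

lemma setLIntegral_le_lintegral_initialSegment_of_antitone {w : ℝ → ℝ≥0∞} (hw : Antitone w)
    {A : Set ℝ} (hA : MeasurableSet A) (hA0 : A ⊆ Ioi 0) :
    ∫⁻ u in A, w u ≤
      ∫⁻ v in {v | ENNReal.ofReal v < volume A}, w v ∂(volume.restrict (Ioi 0)) := by
  rw [Measure.restrict_restrict (measurableSet_lt measurable_ofReal measurable_const)]
  rcases eq_or_ne (volume A) ∞ with hA_top | hA_fin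
  · simpa [hA_top] using lintegral_mono_set hA0
  · have hseg : {v | ENNReal.ofReal v < volume A} ∩ Ioi 0 = Ioo 0 (volume A).toReal := by
      ext v
      rw [mem_Ioo, and_comm]
      exact and_congr_left fun hv => ofReal_lt_iff_lt_toReal (le_of_lt hv) hA_fin
    rw [hseg]
    exact setLIntegral_le_setLIntegral_Ioo_of_antitone hw hA hA0 (ofReal_toReal hA_fin).symm

lemma volume_restrict_Ioi_setOf_ofReal_lt_distribution_le_mu {X : Type*} [MeasurableSpace X]
    (ν : Measure X) (f : X → ℝ) (t : ℝ) :
    volume.restrict (Ioi 0) {s | ENNReal.ofReal t < ν {u | s < |f u|}} ≤ mu ν f t := by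
  refine le_sInf ?_
  rintro _ ⟨s, ⟨-, hs⟩, rfl⟩
  calc volume.restrict (Ioi 0) {r | ENNReal.ofReal t < ν {u | r < |f u|}}
      ≤ volume.restrict (Ioi 0) (Iic s) := measure_mono fun r hr => by
        by_contra hsr
        have hmono : ν {u | r < |f u|} ≤ ν {u | s < |f u|} :=
          measure_mono fun u (hu : r < |f u|) => (lt_of_not_ge hsr).trans hu
        exact (hmono.trans hs).not_gt hr
    _ = ENNReal.ofReal s := by
        rw [Measure.restrict_apply measurableSet_Iic, Iic_inter_Ioi, Real.volume_Ioc, sub_zero]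

theorem setLIntegral_Ioi_abs_mul_le_setLIntegral_mu_mul (f : ℝ → ℝ) (hf : Measurable f)
    {w : ℝ → ℝ≥0∞} (hw : Antitone w) :
    ∫⁻ u in Ioi 0, ENNReal.ofReal |f u| * w u ≤
      ∫⁻ t in Ioi 0, mu (volume.restrict (Ioi 0)) f t * w t := by
  set ν := volume.restrict (Ioi (0 : ℝ))
  have hlevel (s : ℝ) : MeasurableSet {u | s < |f u|} :=
    measurableSet_lt measurable_const hf.abs
  have hdist : Measurable fun s => ν {u | s < |f u|} :=
    Antitone.measurable fun s _ hst => measure_mono fun u (hu : _ < |f u|) => hst.trans_lt hu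
  calc ∫⁻ u in Ioi 0, ENNReal.ofReal |f u| * w u
        = ∫⁻ u, ENNReal.ofReal |f u| ∂(ν.withDensity w) := by
        rw [lintegral_withDensity_eq_lintegral_mul ν hw.measurable hf.abs.ennreal_ofReal]
        exact lintegral_congr fun _ => mul_comm _ _
    _ = ∫⁻ s in Ioi 0, ν.withDensity w {u | s < |f u|} :=
        lintegral_eq_lintegral_meas_lt _ (ae_of_all _ fun _ => abs_nonneg _)
          hf.abs.aemeasurable
    _ ≤ ∫⁻ s in Ioi 0, ∫⁻ t in {t | ENNReal.ofReal t < ν {u | s < |f u|}}, w t ∂ν := by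
        refine lintegral_mono fun s => ?_
        rw [withDensity_apply _ (hlevel s), Measure.restrict_restrict (hlevel s),
          Measure.restrict_apply (hlevel s)]
        exact setLIntegral_le_lintegral_initialSegment_of_antitone hw
          ((hlevel s).inter measurableSet_Ioi) inter_subset_right
    _ = ∫⁻ t, volume.restrict (Ioi 0) {s | ENNReal.ofReal t < ν {u | s < |f u|}} * w t ∂ν :=
        lintegral_setLIntegral_preimage_swap
          (measurableSet_lt (measurable_ofReal.comp measurable_snd) (hdist.comp measurable_fst))
          hw.measurable
    _ ≤ ∫⁻ t, mu ν f t * w t ∂ν := by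
        gcongr with t
        exact volume_restrict_Ioi_setOf_ofReal_lt_distribution_le_mu ν f t

noncomputable def cesaroWeight (u : ℝ) : ℝ≥0∞ := min 1 (ENNReal.ofReal u)⁻¹

lemma cesaroWeight_antitone : Antitone cesaroWeight := fun _ _ hab =>
  min_le_min le_rfl (ENNReal.inv_le_inv.mpr (ofReal_le_ofReal hab))

lemma cesaroWeight_eq {u : ℝ} (hu : 0 < u) :
    cesaroWeight u = volume.restrict (Ioc 0 1) (Iio u) / ENNReal.ofReal u := by
  rw [Measure.restrict_apply measurableSet_Iio, cesaroWeight]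
  rcases le_or_gt u 1 with hu1 | hu1
  · have : Iio u ∩ Ioc 0 1 = Ioo 0 u := by
      ext s; simp only [mem_inter_iff, mem_Iio, mem_Ioc, mem_Ioo]
      constructor
      · rintro ⟨h, h0, -⟩; exact ⟨h0, h⟩
      · rintro ⟨h0, h⟩; exact ⟨h, h0, h.le.trans hu1⟩
    rw [this, Real.volume_Ioo, sub_zero, ENNReal.div_self (ofReal_pos.2 hu).ne' ofReal_ne_top]
    exact min_eq_left (ENNReal.one_le_inv.2 (ofReal_le_one.2 hu1))
  · rw [inter_eq_self_of_subset_right fun s hs => hs.2.trans_lt hu1, Real.volume_Ioc, sub_zero,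
      ofReal_one, one_div]
    exact min_eq_right (ENNReal.inv_le_one.2 (one_le_ofReal.2 hu1.le))

lemma cesaroWeight_le (u : ℝ) : cesaroWeight u ≤ 2 / ENNReal.ofReal (1 + u) := by
  rcases le_or_gt u 1 with hu1 | hu1
  · refine (min_le_left _ _).trans ?_
    rw [ENNReal.le_div_iff_mul_le (Or.inr two_ne_zero) (Or.inl ofReal_ne_top), one_mul]
    exact (ofReal_le_ofReal (by linarith : 1 + u ≤ 2)).trans_eq (ofReal_ofNat 2)
  · refine (min_le_right _ _).trans ?_
    rw [← ofReal_inv_of_pos (by linarith), ← ofReal_ofNat 2,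
      ← ofReal_div_of_pos (by linarith)]
    refine ofReal_le_ofReal ?_
    rw [inv_eq_one_div, div_le_div_iff₀ (by linarith) (by linarith)]
    linarith

lemma setLIntegral_Ioc_setLIntegral_Ioi_div_eq (g : ℝ → ℝ≥0∞) (hg : Measurable g) :
    ∫⁻ s in Ioc (0 : ℝ) 1, ∫⁻ u in Ioi s, g u / ENNReal.ofReal u =
      ∫⁻ u in Ioi 0, g u * cesaroWeight u := by
  calc ∫⁻ s in Ioc (0 : ℝ) 1, ∫⁻ u in Ioi s, g u / ENNReal.ofReal u
        = ∫⁻ s in Ioc 0 1, ∫⁻ u in Ioi s, g u / ENNReal.ofReal u ∂(volume.restrict (Ioi 0)) :=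
        setLIntegral_congr_fun measurableSet_Ioc fun s hs => by
          rw [Measure.restrict_restrict measurableSet_Ioi, Ioi_inter_Ioi, sup_eq_left.2 hs.1.le]
    _ = ∫⁻ u in Ioi 0, volume.restrict (Ioc 0 1) (Iio u) * (g u / ENNReal.ofReal u) :=
        lintegral_setLIntegral_preimage_swap (measurableSet_lt measurable_fst measurable_snd)
          (hg.div measurable_ofReal)
    _ = ∫⁻ u in Ioi 0, g u * cesaroWeight u :=
        setLIntegral_congr_fun measurableSet_Ioi fun u hu => by
          rw [cesaroWeight_eq hu]
          simp only [div_eq_mul_inv]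
          ring

/-- For every measurable `f : (0,∞) → ℝ`, with `(C*|f|)(s) = ∫_s^∞ |f(u)|/u du`, one has
`∫_0^1 (C*|f|)(s) ds ≤ 2 ∫_0^∞ μ(u,f)/(1+u) du`. -/
theorem stmt_0 (f : ℝ → ℝ) (hf : Measurable f) :
    (∫⁻ s in Ioc (0:ℝ) 1, ∫⁻ u in Ioi s, ENNReal.ofReal |f u| / ENNReal.ofReal u) ≤
      2 * ∫⁻ u in Ioi (0:ℝ), mu (volume.restrict (Ioi 0)) f u / ENNReal.ofReal (1 + u) := by
  calc (∫⁻ s in Ioc (0:ℝ) 1, ∫⁻ u in Ioi s, ENNReal.ofReal |f u| / ENNReal.ofReal u)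
        = ∫⁻ u in Ioi 0, ENNReal.ofReal |f u| * cesaroWeight u :=
        setLIntegral_Ioc_setLIntegral_Ioi_div_eq _ hf.abs.ennreal_ofReal
    _ ≤ ∫⁻ t in Ioi 0, mu (volume.restrict (Ioi 0)) f t * cesaroWeight t :=
        setLIntegral_Ioi_abs_mul_le_setLIntegral_mu_mul f hf cesaroWeight_antitone
    _ ≤ ∫⁻ t in Ioi 0, 2 * (mu (volume.restrict (Ioi 0)) f t / ENNReal.ofReal (1 + t)) := by
        refine lintegral_mono fun t => ?_
        calc mu (volume.restrict (Ioi 0)) f t * cesaroWeight t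
            ≤ mu (volume.restrict (Ioi 0)) f t * (2 / ENNReal.ofReal (1 + t)) := by
              gcongr; exact cesaroWeight_le t
          _ = 2 * (mu (volume.restrict (Ioi 0)) f t / ENNReal.ofReal (1 + t)) := by
              simp only [div_eq_mul_inv]; ring
    _ = 2 * ∫⁻ t in Ioi 0, mu (volume.restrict (Ioi 0)) f t / ENNReal.ofReal (1 + t) :=
        lintegral_const_mul' _ _ ofNat_ne_top
end

section
/- There is an absolute constant c ≥ 1 such that for every sequence a = (a_k)_{k≥0} of real numbers, c⁻¹ ‖a‖_{m_log} ≤ sup_{1<p≤2} (p−1) (∑_{k≥0} |a_k|^p)^{1/p} ≤ c ‖a‖_{m_log}, where both sides take values in [0,∞]. -/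
open MeasureTheory ENNReal Set

/-!
`μ(·, a)` is equimeasurable with `|a|`: `μ(j, a) > s` iff more than `j` of the `|a k|` exceed `s`.
By the layer-cake formula, `∑ |a k|^p = ∑ μ(j, a)^p`, so both inequalities concern the
nonincreasing sequence `x j = μ(j, a)`.

For the first one, Hölder's inequality with `p = 1 + 1/(L+1)`, `q = L + 2`, `L = log (n+2)` gives
`∑_{j≤n} x j ≤ (n+1)^(1/q) ‖x‖_p ≤ e (L+1) (p-1) ‖x‖_p`.

For the second, let `∑_{j≤n} x j ≤ R log (n+2)` and `p = 1 + ε`. Monotonicity gives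
`x j ≤ (4R/ε) (j+1)^(ε/2-1)`, hence `∑ x j ^ (1+ε) ≤ (4R/ε)^ε ∑ x j (j+1)^(-ε/2)`. Since
`log (n+1)` is at most the harmonic number `H_n`, Abel summation against the nonincreasing weights
`(j+1)^(-ε/2)` replaces `x j` by `R/(j+1)`, and `∑ (j+1)^(-1-ε/2) ≤ 1 + 2/ε`.
Altogether `ε ‖x‖_{1+ε} ≤ 4R`.
-/

lemma mu_antitone {X : Type*} [MeasurableSpace X] (ν : Measure X) (f : X → ℝ) :
    Antitone (mu ν f) := fun _ _ hst =>
  sInf_le_sInf (image_mono fun _ hs => ⟨hs.1, hs.2.trans (ENNReal.ofReal_le_ofReal hst)⟩)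

section Sequence

variable {a : ℕ → ℝ}

lemma ofReal_le_mu_count {j : ℕ} {b : ℝ}
    (h : ∀ s, 0 ≤ s → s < b → (j : ℝ≥0∞) < Measure.count {k | s < |a k|}) :
    ENNReal.ofReal b ≤ mu Measure.count a j := by
  refine le_sInf ?_
  rintro _ ⟨s, ⟨hs, hcount⟩, rfl⟩
  rw [ENNReal.ofReal_natCast] at hcount
  exact ENNReal.ofReal_le_ofReal (not_lt.1 fun hsb => (h s hs hsb).not_ge hcount)

lemma ofReal_lt_mu_count_iff {j : ℕ} {s : ℝ} (hs : 0 ≤ s) :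
    ENNReal.ofReal s < mu Measure.count a j ↔ (j : ℝ≥0∞) < Measure.count {k | s < |a k|} := by
  refine ⟨fun h => ?_, fun h => ?_⟩
  · by_contra! hcount
    rw [← ENNReal.ofReal_natCast] at hcount
    exact (sInf_le (mem_image_of_mem _ ⟨hs, hcount⟩) : mu Measure.count a j ≤ _).not_gt h
  · -- `j + 1` of the `|a k|` exceed `s`; so does the smallest of them, which bounds `mu` below.
    rw [Measure.count_apply (.of_discrete)] at h
    obtain ⟨t, hts, htcard⟩ := exists_subset_encard_eq (Order.add_one_le_of_lt (mod_cast h))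
    have htne : t.Nonempty := by
      rw [← encard_pos, htcard]; exact_mod_cast j.succ_pos
    obtain ⟨k₀, hk₀t, hk₀⟩ :=
      t.exists_min_image (fun k => |a k|) (finite_of_encard_eq_coe htcard) htne
    refine (ENNReal.ofReal_lt_ofReal_iff_of_nonneg hs |>.2 (hts hk₀t)).trans_le
      (ofReal_le_mu_count fun r _ hr => ?_)
    calc (j : ℝ≥0∞) < t.encard := by rw [htcard]; exact_mod_cast j.lt_succ_self
      _ = Measure.count t := (Measure.count_apply .of_discrete).symm
      _ ≤ Measure.count {k | r < |a k|} := measure_mono fun k hk => hr.trans_le (hk₀ k hk)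

lemma count_setOf_natCast_lt (c : ℕ∞) :
    Measure.count {j : ℕ | (j : ℕ∞) < c} = c := by
  induction c using ENat.recTopCoe with
  | top => simp [Measure.count_univ]
  | coe m =>
    have : {j : ℕ | (j : ℕ∞) < m} = ↑(Finset.range m) := by ext; simp
    rw [this, Measure.count_apply_finset, Finset.card_range]; rfl

lemma count_ofReal_lt_mu_count {s : ℝ} (hs : 0 ≤ s) :
    Measure.count {j : ℕ | ENNReal.ofReal s < mu Measure.count a j} =
      Measure.count {k | s < |a k|} := by
  simp_rw [ofReal_lt_mu_count_iff hs]
  rw [Measure.count_apply (.of_discrete (s := {k | s < |a k|}))]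
  exact_mod_cast count_setOf_natCast_lt _

lemma tsum_ofReal_abs_rpow_eq_top {j : ℕ} (hj : mu Measure.count a j = ⊤) {p : ℝ} (hp : 0 < p) :
    ∑' k, ENNReal.ofReal (|a k| ^ p) = ⊤ := by
  refine ENNReal.eq_top_of_forall_nnreal_le fun r => ?_
  obtain ⟨k, hk⟩ : {k | (r : ℝ) ^ (1 / p) < |a k|}.Nonempty := by
    rw [← Measure.count_ne_zero_iff]
    have := (ofReal_lt_mu_count_iff (j := j) (s := (r : ℝ) ^ (1 / p)) (by positivity)).1
      (hj ▸ ofReal_lt_top)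
    exact (zero_le.trans_lt this).ne'
  calc (r : ℝ≥0∞) = ENNReal.ofReal (((r : ℝ) ^ (1 / p)) ^ p) := by
        rw [← Real.rpow_mul r.coe_nonneg, one_div_mul_cancel hp.ne', Real.rpow_one,
          ofReal_coe_nnreal]
    _ ≤ ENNReal.ofReal (|a k| ^ p) :=
        ofReal_le_ofReal (Real.rpow_le_rpow (by positivity) hk.le hp.le)
    _ ≤ ∑' k, ENNReal.ofReal (|a k| ^ p) := ENNReal.le_tsum k

lemma tsum_mu_count_rpow {p : ℝ} (hp : 0 < p) :
    ∑' j : ℕ, mu Measure.count a j ^ p = ∑' k, ENNReal.ofReal (|a k| ^ p) := by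
  by_cases htop : ∃ j : ℕ, mu Measure.count a j = ⊤
  · obtain ⟨j, hj⟩ := htop
    rw [tsum_ofReal_abs_rpow_eq_top hj hp]
    exact top_unique ((ENNReal.le_tsum j).trans_eq' (by rw [hj, ENNReal.top_rpow_of_pos hp]))
  push Not at htop
  calc ∑' j : ℕ, mu Measure.count a j ^ p
      = ∫⁻ j : ℕ, ENNReal.ofReal ((mu Measure.count a j).toReal ^ p) ∂Measure.count := by
        rw [lintegral_count]
        congr with j
        rw [← ENNReal.ofReal_rpow_of_nonneg toReal_nonneg hp.le, ofReal_toReal (htop j)]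
    _ = ENNReal.ofReal p * ∫⁻ t in Ioi 0,
          Measure.count {j : ℕ | t < (mu Measure.count a j).toReal} *
            ENNReal.ofReal (t ^ (p - 1)) :=
        lintegral_rpow_eq_lintegral_meas_lt_mul _ (ae_of_all _ fun _ => toReal_nonneg)
          (measurable_of_countable _).aemeasurable hp
    _ = ENNReal.ofReal p * ∫⁻ t in Ioi 0, Measure.count {k | t < |a k|} *
          ENNReal.ofReal (t ^ (p - 1)) := by
        congr 1
        refine setLIntegral_congr_fun measurableSet_Ioi fun t ht => ?_
        simp_rw [← count_ofReal_lt_mu_count (le_of_lt ht),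
          ENNReal.ofReal_lt_iff_lt_toReal (le_of_lt ht) (htop _)]
    _ = ∑' k, ENNReal.ofReal (|a k| ^ p) := by
        rw [← lintegral_rpow_eq_lintegral_meas_lt_mul _ (ae_of_all _ fun _ => abs_nonneg _)
          (measurable_of_countable _).aemeasurable hp, lintegral_count]

end Sequence

section RealSequences

open Finset

lemma sum_mul_le_sum_mul_of_sum_le {x y v : ℕ → ℝ} (hv : Antitone v) (hv₀ : ∀ j, 0 ≤ v j)
    (hxy : ∀ n, ∑ j ∈ range n, x j ≤ ∑ j ∈ range n, y j) (N : ℕ) :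
    ∑ j ∈ range N, x j * v j ≤ ∑ j ∈ range N, y j * v j := by
  have hD : ∀ n, 0 ≤ ∑ j ∈ range n, (y j - x j) := fun n => by
    rw [sum_sub_distrib]; linarith [hxy n]
  have hparts := sum_range_by_parts v (fun j => y j - x j) N
  simp only [smul_eq_mul] at hparts
  suffices 0 ≤ ∑ j ∈ range N, v j * (y j - x j) by
    simp only [mul_sub, sum_sub_distrib, sub_nonneg] at this
    simpa only [mul_comm (v _)] using this
  rw [hparts, sub_nonneg]
  exact (sum_nonpos fun i _ => mul_nonpos_of_nonpos_of_nonneg (sub_nonpos.2 (hv i.le_succ))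
    (hD _)).trans (mul_nonneg (hv₀ _) (hD N))

lemma sum_range_rpow_neg_le {β : ℝ} (hβ : 0 < β) (N : ℕ) :
    ∑ j ∈ range N, ((j : ℝ) + 1) ^ (-(1 + β)) ≤ 1 + 1 / β := by
  cases N with
  | zero => simp; positivity
  | succ M =>
    have hanti : AntitoneOn (fun x : ℝ => x ^ (-(1 + β))) (Set.Icc 1 (1 + M)) :=
      fun x hx y _ hxy => Real.rpow_le_rpow_of_nonpos (by linarith [hx.1]) hxy (by linarith)
    have hint : ∫ x in (1 : ℝ)..1 + M, x ^ (-(1 + β)) ≤ 1 / β := by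
      rw [integral_rpow (Or.inr ⟨by linarith, by simp⟩), show -(1 + β) + 1 = -β by ring,
        Real.one_rpow, div_neg, ← neg_div, neg_sub]
      have : 0 ≤ (1 + (M : ℝ)) ^ (-β) := by positivity
      gcongr
      linarith
    rw [sum_range_succ', add_comm]
    gcongr
    · simp
    · refine le_trans (le_of_eq ?_) ((hanti.sum_le_integral).trans hint)
      refine sum_congr rfl fun i _ => ?_
      push_cast; ring_nf

lemma log_add_one_le_two_mul_rpow_div {y α : ℝ} (hy : 1 ≤ y) (hα : 0 < α) (hα₁ : α ≤ 1) :
    Real.log (y + 1) ≤ 2 * y ^ α / α := by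
  calc Real.log (y + 1) ≤ (y + 1) ^ α / α := Real.log_le_rpow_div (by linarith) hα
    _ ≤ (2 * y) ^ α / α := by gcongr; linarith
    _ = 2 ^ α * y ^ α / α := by rw [Real.mul_rpow (by norm_num) (by linarith)]
    _ ≤ 2 * y ^ α / α := by
        gcongr
        simpa using Real.rpow_le_rpow_of_exponent_le (by norm_num : (1 : ℝ) ≤ 2) hα₁

lemma rpow_le_of_sum_le_mul_log {x : ℕ → ℝ} {R ε : ℝ} (hε₀ : 0 < ε) (hε₁ : ε ≤ 1)
    (hR : 0 ≤ R) (hx₀ : ∀ j, 0 ≤ x j) (hx : Antitone x)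
    (hsum : ∀ n : ℕ, ∑ j ∈ range (n + 1), x j ≤ R * Real.log ((n : ℝ) + 2)) (j : ℕ) :
    x j ^ ε ≤ (4 * R / ε) ^ ε * ((j : ℝ) + 1) ^ (-(ε / 2)) := by
  have hj : (0 : ℝ) < j + 1 := by positivity
  have hxj : x j * ((j : ℝ) + 1) ≤ 4 * R / ε * ((j : ℝ) + 1) ^ (ε / 2) :=
    calc x j * ((j : ℝ) + 1) ≤ ∑ i ∈ range (j + 1), x i := by
          simpa [mul_comm] using card_nsmul_le_sum (range (j + 1)) x (x j)
            fun i hi => hx (Nat.lt_succ_iff.1 (mem_range.1 hi))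
      _ ≤ R * Real.log ((j : ℝ) + 1 + 1) := by rw [add_assoc, one_add_one_eq_two]; exact hsum j
      _ ≤ R * (2 * ((j : ℝ) + 1) ^ (ε / 2) / (ε / 2)) := by
          gcongr
          exact log_add_one_le_two_mul_rpow_div (by linarith [j.cast_nonneg (α := ℝ)])
            (by positivity) (by linarith)
      _ = 4 * R / ε * ((j : ℝ) + 1) ^ (ε / 2) := by field_simp; ring
  have hxj' : x j ≤ 4 * R / ε * ((j : ℝ) + 1) ^ (ε / 2 - 1) := by
    rwa [Real.rpow_sub_one hj.ne', ← mul_div_assoc, le_div_iff₀ hj]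
  calc x j ^ ε ≤ (4 * R / ε * ((j : ℝ) + 1) ^ (ε / 2 - 1)) ^ ε := by gcongr; exact hx₀ j
    _ = (4 * R / ε) ^ ε * ((j : ℝ) + 1) ^ ((ε / 2 - 1) * ε) := by
        rw [Real.mul_rpow (by positivity) (by positivity), Real.rpow_mul hj.le]
    _ ≤ (4 * R / ε) ^ ε * ((j : ℝ) + 1) ^ (-(ε / 2)) := by
        gcongr
        · linarith
        · nlinarith

lemma sum_range_le_of_sum_le_mul_log {x : ℕ → ℝ} {R : ℝ} (hR : 0 ≤ R)
    (hsum : ∀ n : ℕ, ∑ j ∈ range (n + 1), x j ≤ R * Real.log ((n : ℝ) + 2)) (n : ℕ) :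
    ∑ j ∈ range n, x j ≤ ∑ j ∈ range n, R * ((j : ℝ) + 1) ^ (-1 : ℝ) := by
  cases n with
  | zero => simp
  | succ n =>
    calc ∑ j ∈ range (n + 1), x j ≤ R * Real.log ((n : ℝ) + 2) := hsum n
      _ ≤ R * harmonic (n + 1) := by
          gcongr
          simpa [add_assoc, one_add_one_eq_two] using log_add_one_le_harmonic (n + 1)
      _ = ∑ j ∈ range (n + 1), R * ((j : ℝ) + 1) ^ (-1 : ℝ) := by
          simp [harmonic, mul_sum, Real.rpow_neg_one]

lemma sum_rpow_le_of_sum_le_mul_log {x : ℕ → ℝ} {R ε : ℝ} (hε₀ : 0 < ε) (hε₁ : ε ≤ 1)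
    (hR : 0 ≤ R) (hx₀ : ∀ j, 0 ≤ x j) (hx : Antitone x)
    (hsum : ∀ n : ℕ, ∑ j ∈ range (n + 1), x j ≤ R * Real.log ((n : ℝ) + 2)) (N : ℕ) :
    ∑ j ∈ range N, x j ^ (1 + ε) ≤ (4 * R / ε) ^ (1 + ε) := by
  set K := 4 * R / ε
  have hv : Antitone fun j : ℕ => ((j : ℝ) + 1) ^ (-(ε / 2)) := fun i j hij =>
    Real.rpow_le_rpow_of_nonpos (by positivity) (by gcongr) (by linarith)
  have hK : R * (1 + 1 / (ε / 2)) ≤ K := by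
    have : 1 ≤ 2 / ε := by rw [le_div_iff₀ hε₀]; linarith
    calc R * (1 + 1 / (ε / 2)) ≤ R * (2 / ε + 2 / ε) := by rw [one_div_div]; gcongr
      _ = K := by ring
  calc ∑ j ∈ range N, x j ^ (1 + ε) = ∑ j ∈ range N, x j * x j ^ ε := by
        refine sum_congr rfl fun j _ => ?_
        rw [Real.rpow_add' (hx₀ j) (by linarith), Real.rpow_one]
    _ ≤ ∑ j ∈ range N, x j * (K ^ ε * ((j : ℝ) + 1) ^ (-(ε / 2))) := by
        gcongr with j
        exacts [hx₀ j, rpow_le_of_sum_le_mul_log hε₀ hε₁ hR hx₀ hx hsum j]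
    _ = K ^ ε * ∑ j ∈ range N, x j * ((j : ℝ) + 1) ^ (-(ε / 2)) := by
        rw [mul_sum]; exact sum_congr rfl fun j _ => by ring
    _ ≤ K ^ ε * ∑ j ∈ range N, R * ((j : ℝ) + 1) ^ (-1 : ℝ) * ((j : ℝ) + 1) ^ (-(ε / 2)) :=
        mul_le_mul_of_nonneg_left (sum_mul_le_sum_mul_of_sum_le hv (fun j => by positivity)
          (sum_range_le_of_sum_le_mul_log hR hsum) N) (by positivity)
    _ = K ^ ε * (R * ∑ j ∈ range N, ((j : ℝ) + 1) ^ (-(1 + ε / 2))) := by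
        congr 1
        rw [mul_sum]
        refine sum_congr rfl fun j _ => ?_
        rw [mul_assoc, ← Real.rpow_add (by positivity)]
        ring_nf
    _ ≤ K ^ ε * K := by
        gcongr
        exact (mul_le_mul_of_nonneg_left (sum_range_rpow_neg_le (by positivity) N) hR).trans hK
    _ = K ^ (1 + ε) := by
        rw [Real.rpow_add' (by positivity) (by linarith), Real.rpow_one, mul_comm]

end RealSequences

noncomputable def marcinkiewiczLogNorm (a : ℕ → ℝ) : ℝ≥0∞ :=
  ⨆ n : ℕ, (∑ j ∈ Finset.range (n + 1), mu Measure.count a (j : ℝ)) /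
    ENNReal.ofReal (Real.log ((n : ℝ) + 2))

noncomputable def extrapolationNorm (a : ℕ → ℝ) : ℝ≥0∞ :=
  ⨆ (p : ℝ) (_ : 1 < p) (_ : p ≤ 2),
    ENNReal.ofReal (p - 1) * (∑' k : ℕ, ENNReal.ofReal (|a k| ^ p)) ^ (1 / p)

section Norms

variable {a : ℕ → ℝ}

lemma le_extrapolationNorm {p : ℝ} (hp₁ : 1 < p) (hp₂ : p ≤ 2) :
    ENNReal.ofReal (p - 1) * (∑' k : ℕ, ENNReal.ofReal (|a k| ^ p)) ^ (1 / p) ≤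
      extrapolationNorm a :=
  le_iSup₂_of_le p hp₁ (le_iSup_of_le hp₂ le_rfl)

lemma sum_range_mu_count_le {p q : ℝ} (hpq : p.HolderConjugate q) (n : ℕ) :
    ∑ j ∈ Finset.range n, mu Measure.count a j ≤
      (n : ℝ≥0∞) ^ (1 / q) * (∑' k, ENNReal.ofReal (|a k| ^ p)) ^ (1 / p) := by
  calc ∑ j ∈ Finset.range n, mu Measure.count a j
      = ∑ j ∈ Finset.range n, mu Measure.count a j * 1 := by simp_rw [mul_one]
    _ ≤ (∑ j ∈ Finset.range n, mu Measure.count a j ^ p) ^ (1 / p) *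
          (∑ j ∈ Finset.range n, (1 : ℝ≥0∞) ^ q) ^ (1 / q) :=
        ENNReal.inner_le_Lp_mul_Lq _ _ _ hpq
    _ ≤ (∑' k, ENNReal.ofReal (|a k| ^ p)) ^ (1 / p) * (n : ℝ≥0∞) ^ (1 / q) := by
        rw [← tsum_mu_count_rpow hpq.pos]
        simp only [ENNReal.one_rpow, Finset.sum_const, Finset.card_range, nsmul_eq_mul, mul_one]
        gcongr
        exacts [one_div_nonneg.2 hpq.nonneg, ENNReal.sum_le_tsum _]
    _ = _ := mul_comm _ _

lemma natCast_add_one_rpow_inv_log_le_three (n : ℕ) :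
    ((n + 1 : ℕ) : ℝ≥0∞) ^ (1 / (Real.log ((n : ℝ) + 2) + 2)) ≤ 3 := by
  set L := Real.log ((n : ℝ) + 2)
  have hL : 0 < L := Real.log_pos (by linarith [n.cast_nonneg (α := ℝ)])
  rw [← ENNReal.ofReal_natCast, ENNReal.ofReal_rpow_of_nonneg (by positivity) (by positivity)]
  refine ENNReal.ofReal_le_of_le_toReal ?_
  calc ((n + 1 : ℕ) : ℝ) ^ (1 / (L + 2)) ≤ ((n : ℝ) + 2) ^ (1 / (L + 2)) := by
        gcongr; push_cast; linarith
    _ = Real.exp (L / (L + 2)) := by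
        rw [Real.rpow_def_of_pos (by positivity), mul_one_div]
    _ ≤ Real.exp 1 := Real.exp_le_exp.2 ((div_le_one (by linarith)).2 (by linarith))
    _ ≤ _ := by norm_num; linarith [Real.exp_one_lt_d9]

lemma marcinkiewiczLogNorm_le (a : ℕ → ℝ) :
    marcinkiewiczLogNorm a ≤ 8 * extrapolationNorm a := by
  refine iSup_le fun n => ?_
  set L := Real.log ((n : ℝ) + 2)
  have hL : 3 / 5 < L := by
    have := Real.log_le_log two_pos (by linarith [n.cast_nonneg (α := ℝ)] : (2 : ℝ) ≤ n + 2)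
    linarith [Real.log_two_gt_d9]
  set p := 1 + 1 / (L + 1)
  have hpq : p.HolderConjugate (L + 2) := by
    rw [Real.holderConjugate_iff]
    refine ⟨by simp only [p]; linarith [show 0 < 1 / (L + 1) by positivity], ?_⟩
    simp only [p]; field_simp; ring
  have hp₂ : p ≤ 2 := by
    simp only [p]; linarith [(div_le_one (by linarith : 0 < L + 1)).2 (by linarith : 1 ≤ L + 1)]
  have hT : (∑' k, ENNReal.ofReal (|a k| ^ p)) ^ (1 / p) ≤
      ENNReal.ofReal (L + 1) * extrapolationNorm a :=
    calc (∑' k, ENNReal.ofReal (|a k| ^ p)) ^ (1 / p)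
        = ENNReal.ofReal (L + 1) *
            (ENNReal.ofReal (p - 1) * (∑' k, ENNReal.ofReal (|a k| ^ p)) ^ (1 / p)) := by
          rw [← mul_assoc, ← ENNReal.ofReal_mul (by linarith)]
          simp only [p]
          rw [add_sub_cancel_left, mul_one_div_cancel (by linarith), ENNReal.ofReal_one, one_mul]
      _ ≤ ENNReal.ofReal (L + 1) * extrapolationNorm a := by
          gcongr; exact le_extrapolationNorm hpq.lt hp₂
  rw [ENNReal.div_le_iff (by simp; linarith) ofReal_ne_top]
  calc ∑ j ∈ Finset.range (n + 1), mu Measure.count a j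
      ≤ ((n + 1 : ℕ) : ℝ≥0∞) ^ (1 / (L + 2)) * (∑' k, ENNReal.ofReal (|a k| ^ p)) ^ (1 / p) :=
        sum_range_mu_count_le hpq (n + 1)
    _ ≤ ENNReal.ofReal 3 * (ENNReal.ofReal (L + 1) * extrapolationNorm a) := by
        rw [ENNReal.ofReal_ofNat]; gcongr; exact natCast_add_one_rpow_inv_log_le_three n
    _ ≤ ENNReal.ofReal 8 * ENNReal.ofReal L * extrapolationNorm a := by
        rw [← mul_assoc, ← ENNReal.ofReal_mul (by norm_num), ← ENNReal.ofReal_mul (by norm_num)]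
        gcongr ENNReal.ofReal ?_ * _
        linarith
    _ = 8 * extrapolationNorm a * ENNReal.ofReal L := by rw [ENNReal.ofReal_ofNat]; ring

lemma sum_range_mu_count_le_mul_log (n : ℕ) :
    ∑ j ∈ Finset.range (n + 1), mu Measure.count a j ≤
      marcinkiewiczLogNorm a * ENNReal.ofReal (Real.log ((n : ℝ) + 2)) := by
  refine (ENNReal.div_le_iff ?_ ofReal_ne_top).1 (le_iSup_of_le n le_rfl)
  simpa using Real.log_pos (by linarith [n.cast_nonneg (α := ℝ)] : (1 : ℝ) < n + 2)

lemma tsum_rpow_le_of_marcinkiewiczLogNorm_ne_top (hM : marcinkiewiczLogNorm a ≠ ⊤) {p : ℝ}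
    (hp₁ : 1 < p) (hp₂ : p ≤ 2) :
    ∑' k, ENNReal.ofReal (|a k| ^ p) ≤
      ENNReal.ofReal (4 * (marcinkiewiczLogNorm a).toReal / (p - 1)) ^ p := by
  have hfin : ∀ j : ℕ, mu Measure.count a j ≠ ⊤ := fun j =>
    ne_top_of_le_ne_top (mul_ne_top hM ofReal_ne_top)
      ((Finset.single_le_sum (fun i _ => zero_le) (Finset.self_mem_range_succ j)).trans
        (sum_range_mu_count_le_mul_log j))
  have hsum := sum_rpow_le_of_sum_le_mul_log (x := fun j => (mu Measure.count a j).toReal)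
    (by linarith : 0 < p - 1) (by linarith) toReal_nonneg (fun _ => toReal_nonneg)
    (fun i j hij => toReal_mono (hfin i) (mu_antitone _ _ (by exact_mod_cast hij)))
    (fun n => by
      rw [← toReal_ofReal (Real.log_pos (by linarith [n.cast_nonneg (α := ℝ)])).le,
        ← toReal_mul, ← toReal_sum fun j _ => hfin j]
      exact toReal_mono (mul_ne_top hM ofReal_ne_top) (sum_range_mu_count_le_mul_log n))
  rw [add_sub_cancel] at hsum
  rw [← tsum_mu_count_rpow (by linarith), ENNReal.tsum_eq_iSup_nat]
  refine iSup_le fun N => ?_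
  calc ∑ j ∈ Finset.range N, mu Measure.count a j ^ p
      = ENNReal.ofReal (∑ j ∈ Finset.range N, (mu Measure.count a j).toReal ^ p) := by
        rw [ofReal_sum_of_nonneg fun j _ => by positivity]
        refine Finset.sum_congr rfl fun j _ => ?_
        rw [← ofReal_rpow_of_nonneg toReal_nonneg (by linarith), ofReal_toReal (hfin j)]
    _ ≤ _ := ofReal_le_ofReal (hsum N)
    _ = _ := (ofReal_rpow_of_nonneg (by positivity) (by linarith)).symm

lemma extrapolationNorm_le (a : ℕ → ℝ) :
    extrapolationNorm a ≤ 4 * marcinkiewiczLogNorm a := by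
  refine iSup₂_le fun p hp₁ => iSup_le fun hp₂ => ?_
  set M := marcinkiewiczLogNorm a
  obtain hM | hM := eq_or_ne M ⊤
  · simp [hM]
  calc ENNReal.ofReal (p - 1) * (∑' k, ENNReal.ofReal (|a k| ^ p)) ^ (1 / p)
      ≤ ENNReal.ofReal (p - 1) * (ENNReal.ofReal (4 * M.toReal / (p - 1)) ^ p) ^ (1 / p) := by
        gcongr; exact tsum_rpow_le_of_marcinkiewiczLogNorm_ne_top hM hp₁ hp₂
    _ = ENNReal.ofReal (p - 1) * ENNReal.ofReal (4 * M.toReal / (p - 1)) := by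
        rw [← ENNReal.rpow_mul, mul_one_div_cancel (by linarith), ENNReal.rpow_one]
    _ = 4 * M := by
        rw [← ofReal_mul (by linarith), mul_div_cancel₀ _ (by linarith), ofReal_mul (by norm_num),
          ofReal_toReal hM, ofReal_ofNat]

end Norms

/-- There is an absolute constant `c ≥ 1` such that for every sequence `a = (a_k)_{k ≥ 0}`,
`c⁻¹ ‖a‖_{m_log} ≤ sup_{1 < p ≤ 2} (p-1) (∑_k |a_k|^p)^{1/p} ≤ c ‖a‖_{m_log}`, where
`‖a‖_{m_log} = sup_n (log(n+2))⁻¹ ∑_{j=0}^n μ(j,a)`. -/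
theorem stmt_3 :
    ∃ c : ℝ≥0∞, 1 ≤ c ∧ c ≠ ⊤ ∧ ∀ a : ℕ → ℝ,
      c⁻¹ * (⨆ n : ℕ, (∑ j ∈ Finset.range (n+1), mu Measure.count a (j : ℝ)) /
          ENNReal.ofReal (Real.log ((n : ℝ) + 2))) ≤
        (⨆ (p : ℝ) (_ : 1 < p) (_ : p ≤ 2),
          ENNReal.ofReal (p - 1) * (∑' k : ℕ, ENNReal.ofReal (|a k| ^ p)) ^ (1/p)) ∧
      (⨆ (p : ℝ) (_ : 1 < p) (_ : p ≤ 2),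
          ENNReal.ofReal (p - 1) * (∑' k : ℕ, ENNReal.ofReal (|a k| ^ p)) ^ (1/p)) ≤
        c * ⨆ n : ℕ, (∑ j ∈ Finset.range (n+1), mu Measure.count a (j : ℝ)) /
          ENNReal.ofReal (Real.log ((n : ℝ) + 2)) := by
  refine ⟨8, by norm_num, by norm_num, fun a => ⟨?_, ?_⟩⟩
  · rw [ENNReal.inv_mul_le_iff (by norm_num) (by norm_num)]
    exact marcinkiewiczLogNorm_le a
  · exact (extrapolationNorm_le a).trans (mul_le_mul_of_nonneg_right (by norm_num) zero_le)
end

section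
/- Let g : (0,∞) → [0,∞] be a nonincreasing measurable function. Then for every t > 0, (1/t) ∫_0^t g(s)² ds + ( ∫_t^∞ g(s)/s ds )² ≤ (2/t) ∫_0^t ( ∫_s^∞ g(u)/u du )² ds, with all quantities taking values in [0,∞]. (Equivalently, C g² + (C* g)² ≤ 2 C((C* g)²) pointwise on (0,∞).) -/
/-!
Put `f u = g u / u` and `K s = ∫_s^t f`, so that `K ≤ C* g` on `(0, t]`. Tonelli over the
triangle `0 < s < v ≤ t` gives `∫_0^t K² = ∫_0^t (∫_0^v K) f(v) dv`, and
`∫_0^v K ≥ ∫_0^v ∫_s^v f = ∫_0^v g ≥ v g(v)` because `g` is nonincreasing. As `v g(v) f(v) = g(v)²`,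
this yields `∫_0^t g² ≤ ∫_0^t (C* g)²`. Since `C* g` is nonincreasing as well,
`t (C* g)(t)² ≤ ∫_0^t (C* g)²`; add the two bounds and divide by `t`.
-/

open MeasureTheory ENNReal Set

theorem lintegral_lintegral_Ioi_swap {μ ν : Measure ℝ} [SFinite μ] [SFinite ν]
    {F : ℝ → ℝ → ℝ≥0∞} (hF : Measurable (Function.uncurry F)) :
    ∫⁻ s, ∫⁻ v in Ioi s, F s v ∂ν ∂μ = ∫⁻ v, ∫⁻ s in Iio v, F s v ∂μ ∂ν := by
  have hG : Measurable (Function.uncurry fun s v => (Ioi s).indicator (F s) v) := by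
    have : (Function.uncurry fun s v => (Ioi s).indicator (F s) v) =
        {p : ℝ × ℝ | p.1 < p.2}.indicator (Function.uncurry F) := by
      ext ⟨s, v⟩; simp [indicator]
    rw [this]
    exact hF.indicator (measurableSet_lt measurable_fst measurable_snd)
  simp_rw [← lintegral_indicator measurableSet_Ioi, ← lintegral_indicator measurableSet_Iio]
  rw [lintegral_lintegral_swap hG.aemeasurable]
  simp only [indicator, mem_Ioi, mem_Iio]

theorem setLIntegral_Ioc_lintegral_Ioc_swap (a t : ℝ) {F : ℝ → ℝ → ℝ≥0∞}
    (hF : Measurable (Function.uncurry F)) :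
    ∫⁻ s in Ioc a t, ∫⁻ v in Ioc s t, F s v = ∫⁻ v in Ioc a t, ∫⁻ s in Ioo a v, F s v := by
  have h := lintegral_lintegral_Ioi_swap (μ := volume.restrict (Ioc a t))
    (ν := volume.restrict (Ioc a t)) hF
  simp only [Measure.restrict_restrict measurableSet_Ioi,
    Measure.restrict_restrict measurableSet_Iio] at h
  convert h using 1
  · refine setLIntegral_congr_fun measurableSet_Ioc fun s hs => ?_
    rw [inter_comm, Ioc_inter_Ioi, max_eq_right hs.1.le]
  · refine setLIntegral_congr_fun measurableSet_Ioc fun v hv => ?_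
    congr 2
    ext s
    simp only [mem_Ioo, mem_inter_iff, mem_Iio, mem_Ioc]
    grind [hv.2]

theorem ofReal_sub_mul_le_setLIntegral_Ioc {f : ℝ → ℝ≥0∞} {a b : ℝ}
    (hf : AntitoneOn f (Ioc a b)) :
    ENNReal.ofReal (b - a) * f b ≤ ∫⁻ u in Ioc a b, f u :=
  calc ENNReal.ofReal (b - a) * f b = ∫⁻ _ in Ioc a b, f b := by
        rw [setLIntegral_const, Real.volume_Ioc, mul_comm]
    _ ≤ ∫⁻ u in Ioc a b, f u := setLIntegral_mono' measurableSet_Ioc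
        fun u hu => hf hu ⟨hu.1.trans_le hu.2, le_rfl⟩ hu.2

theorem setLIntegral_Ioc_lintegral_Ioc_div_ofReal {g : ℝ → ℝ≥0∞} (hg : Measurable g) (v : ℝ) :
    ∫⁻ s in Ioc 0 v, ∫⁻ u in Ioc s v, g u / ENNReal.ofReal u = ∫⁻ u in Ioc 0 v, g u := by
  rw [setLIntegral_Ioc_lintegral_Ioc_swap (F := fun _ u => g u / ENNReal.ofReal u) 0 v
    ((hg.div ENNReal.measurable_ofReal).comp measurable_snd)]
  refine setLIntegral_congr_fun measurableSet_Ioc fun u hu => ?_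
  rw [setLIntegral_const, Real.volume_Ioo, sub_zero,
    ENNReal.div_mul_cancel (by simpa using hu.1) ofReal_ne_top]

theorem setLIntegral_Ioc_sq_lintegral_Ioc {f : ℝ → ℝ≥0∞} (hf : Measurable f) (a t : ℝ) :
    ∫⁻ s in Ioc a t, (∫⁻ v in Ioc s t, f v) ^ 2 =
      ∫⁻ v in Ioc a t, (∫⁻ s in Ioo a v, ∫⁻ w in Ioc s t, f w) * f v := by
  have hK : Antitone fun s => ∫⁻ w in Ioc s t, f w := fun _ _ hst =>
    lintegral_mono_set (Ioc_subset_Ioc_left hst)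
  simp_rw [sq, ← lintegral_const_mul _ hf]
  rw [setLIntegral_Ioc_lintegral_Ioc_swap (F := fun s v => (∫⁻ w in Ioc s t, f w) * f v) a t
    ((hK.measurable.comp measurable_fst).mul (hf.comp measurable_snd))]
  simp_rw [lintegral_mul_const _ hK.measurable]

noncomputable def dualCesaro (g : ℝ → ℝ≥0∞) (s : ℝ) : ℝ≥0∞ :=
  ∫⁻ u in Ioi s, g u / ENNReal.ofReal u

theorem antitone_dualCesaro (g : ℝ → ℝ≥0∞) : Antitone (dualCesaro g) :=
  fun _ _ hst => lintegral_mono_set (Ioi_subset_Ioi hst)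

theorem setLIntegral_sq_le_setLIntegral_dualCesaro_sq {g : ℝ → ℝ≥0∞} (hg : Measurable g)
    (hmono : AntitoneOn g (Ioi 0)) (t : ℝ) :
    ∫⁻ s in Ioc 0 t, g s ^ 2 ≤ ∫⁻ s in Ioc 0 t, dualCesaro g s ^ 2 := by
  set K : ℝ → ℝ≥0∞ := fun s => ∫⁻ u in Ioc s t, g u / ENNReal.ofReal u
  have hK : ∀ v ∈ Ioc 0 t, ENNReal.ofReal v * g v ≤ ∫⁻ s in Ioo 0 v, K s := fun v hv =>
    calc ENNReal.ofReal v * g v ≤ ∫⁻ u in Ioc 0 v, g u := by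
          simpa using ofReal_sub_mul_le_setLIntegral_Ioc (hmono.mono Ioc_subset_Ioi_self)
      _ = ∫⁻ s in Ioo 0 v, ∫⁻ u in Ioc s v, g u / ENNReal.ofReal u := by
          rw [setLIntegral_congr Ioo_ae_eq_Ioc, setLIntegral_Ioc_lintegral_Ioc_div_ofReal hg]
      _ ≤ ∫⁻ s in Ioo 0 v, K s := lintegral_mono fun s =>
          lintegral_mono_set (Ioc_subset_Ioc_right hv.2)
  calc ∫⁻ s in Ioc 0 t, g s ^ 2
      ≤ ∫⁻ v in Ioc 0 t, (∫⁻ s in Ioo 0 v, K s) * (g v / ENNReal.ofReal v) := by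
        refine setLIntegral_mono' measurableSet_Ioc fun v hv => ?_
        calc g v ^ 2 = ENNReal.ofReal v * g v * (g v / ENNReal.ofReal v) := by
              rw [mul_comm (ENNReal.ofReal v), mul_assoc,
                ENNReal.mul_div_cancel (by simpa using hv.1) ofReal_ne_top, sq]
          _ ≤ _ := mul_le_mul_left (hK v hv) _
    _ = ∫⁻ s in Ioc 0 t, K s ^ 2 :=
        (setLIntegral_Ioc_sq_lintegral_Ioc (hg.div ENNReal.measurable_ofReal) 0 t).symm
    _ ≤ ∫⁻ s in Ioc 0 t, dualCesaro g s ^ 2 := lintegral_mono fun s =>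
        pow_le_pow_left₀ zero_le (lintegral_mono_set Ioc_subset_Ioi_self) 2

/-- For a nonincreasing measurable `g : (0,∞) → [0,∞]` and every `t > 0`,
`(1/t) ∫_0^t g(s)² ds + (∫_t^∞ g(s)/s ds)² ≤ (2/t) ∫_0^t (∫_s^∞ g(u)/u du)² ds`;
equivalently, `C g² + (C* g)² ≤ 2 C((C* g)²)` pointwise on `(0,∞)`. -/
theorem stmt_14 (g : ℝ → ℝ≥0∞) (hg : Measurable g) (hmono : AntitoneOn g (Ioi 0))
    (t : ℝ) (ht : 0 < t) :
    (∫⁻ s in Ioc (0:ℝ) t, (g s)^2) / ENNReal.ofReal t +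
        (∫⁻ s in Ioi t, g s / ENNReal.ofReal s)^2 ≤
      2 * ((∫⁻ s in Ioc (0:ℝ) t, (∫⁻ u in Ioi s, g u / ENNReal.ofReal u)^2) /
        ENNReal.ofReal t) := by
  change _ / _ + dualCesaro g t ^ 2 ≤ 2 * ((∫⁻ s in Ioc 0 t, dualCesaro g s ^ 2) / _)
  set T := ENNReal.ofReal t
  have hT : T ≠ 0 := by simpa [T] using ht
  have hsq := setLIntegral_sq_le_setLIntegral_dualCesaro_sq hg hmono t
  have htail : dualCesaro g t ^ 2 * T ≤ ∫⁻ s in Ioc 0 t, dualCesaro g s ^ 2 := by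
    rw [mul_comm]
    simpa using ofReal_sub_mul_le_setLIntegral_Ioc (a := 0) (b := t)
      (((pow_left_mono 2).comp_antitone (antitone_dualCesaro g)).antitoneOn _)
  calc (∫⁻ s in Ioc 0 t, g s ^ 2) / T + dualCesaro g t ^ 2
      = ((∫⁻ s in Ioc 0 t, g s ^ 2) + dualCesaro g t ^ 2 * T) / T := by
        rw [ENNReal.add_div, ENNReal.mul_div_cancel_right hT ofReal_ne_top]
    _ ≤ (2 * ∫⁻ s in Ioc 0 t, dualCesaro g s ^ 2) / T := by
        rw [two_mul]; gcongr
    _ = 2 * ((∫⁻ s in Ioc 0 t, dualCesaro g s ^ 2) / T) := mul_div_assoc _ _ _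
end

section
/- Let (X,ν) be a σ-finite measure space and f : X → ℝ a measurable function with ∫_0^1 μ(s,f) ds < ∞ (i.e. f ∈ (L₁+L∞)(X,ν)). Let F be the measurable function on the product of (X,ν) with the positive integers equipped with counting measure, defined by F(u,k) = f(u)/k. Then for every t > 0, (1/2)·(1/t) ∫_0^t μ(s,f) ds ≤ μ(t,F) ≤ (1/t) ∫_0^t μ(s,f) ds; that is, (1/2)·C μ(f) ≤ μ(F) ≤ C μ(f) pointwise. -/
open MeasureTheory ENNReal Set

/-!
Write `d(s) = ν{|f| > s}`, so that the distribution function of `F` is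
`d_F(s) = ∑_{k ≥ 1} d(ks)`. For `σ > 0` let `n(σ)` count the `k ≥ 1` with `d(ks) > σ`;
these form an initial segment, so `s n(σ) ≤ μ(σ, f) ≤ s (n(σ) + 1)`, while
`∫_0^t n(σ) dσ = ∑_k min(t, d(ks))`. Integrating, `d_F(s) ≤ t` forces `∫_0^t μ(f) ≤ 2st`,
and `∫_0^t μ(f) < rt` forces `d_F(r) ≤ t` because `min(t, ∑_k a_k) ≤ ∑_k min(t, a_k)`.
These are the lower and the upper bound on `μ(t, F)`.
-/

theorem MeasureTheory.Measure.prod_count_apply {X ι : Type*} [MeasurableSpace X]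
    [MeasurableSpace ι] [Countable ι] [MeasurableSingletonClass ι] (ν : Measure X)
    {S : Set (X × ι)} (hS : MeasurableSet S) :
    ν.prod Measure.count S = ∑' i, ν ((·, i) ⁻¹' S) := by
  have hslice (i : ι) : MeasurableSet ((·, i) ⁻¹' S) := measurable_prodMk_right hS
  calc ν.prod Measure.count S = ∫⁻ x, ∑' i, (Prod.mk x ⁻¹' S).indicator 1 i ∂ν := by
        simp_rw [Measure.prod_apply hS, Measure.count,
          Measure.sum_apply _ (measurable_prodMk_left hS),
          Measure.dirac_apply' _ (measurable_prodMk_left hS)]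
    _ = ∑' i, ν ((·, i) ⁻¹' S) := by
        rw [lintegral_tsum fun i => ?_]
        · congr 1; ext i
          rw [← lintegral_indicator_one (hslice i)]
          rfl
        · exact (measurable_const.indicator (hslice i)).aemeasurable

theorem IsLowerSet.mem_iff_lt_encard {S : Set ℕ} (hS : IsLowerSet S) {k : ℕ} :
    k ∈ S ↔ (k : ℕ∞) < S.encard := by
  obtain rfl | ⟨n, rfl⟩ := hS.eq_univ_or_Iio
  · simp [encard_univ]
  · rw [show Iio n = {i | i < n} from rfl, Nat.encard_range]
    simp

theorem ENNReal.min_tsum_le_tsum_min {ι : Type*} (a : ℝ≥0∞) (D : ι → ℝ≥0∞) :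
    min a (∑' i, D i) ≤ ∑' i, min a (D i) := by
  by_cases h : ∃ i, a ≤ D i
  · obtain ⟨i, hi⟩ := h
    calc min a (∑' i, D i) ≤ min a (D i) := by rw [min_eq_left hi]; exact min_le_left _ _
      _ ≤ ∑' i, min a (D i) := ENNReal.le_tsum i
  · push Not at h
    simp_rw [min_eq_right (h _).le]
    exact min_le_right _ _

theorem Real.volume_Ioc_inter_setOf_ofReal_lt (t : ℝ) (a : ℝ≥0∞) :
    volume (Ioc 0 t ∩ {σ | ENNReal.ofReal σ < a}) = min (ENNReal.ofReal t) a := by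
  rcases eq_or_ne a ⊤ with rfl | ha
  · simp
  have hset : Ioc 0 t ∩ {σ | ENNReal.ofReal σ < a} = Ioc 0 t ∩ Iio a.toReal := by
    ext σ
    simp only [mem_inter_iff, mem_Ioc, mem_ofPred_eq, mem_Iio, and_congr_right_iff]
    exact fun h => ENNReal.ofReal_lt_iff_lt_toReal h.1.le ha
  rw [hset]
  apply le_antisymm
  · refine le_min ?_ ?_
    · exact (measure_mono inter_subset_left).trans_eq (by simp)
    · calc volume (Ioc 0 t ∩ Iio a.toReal) ≤ volume (Ioo 0 a.toReal) :=
            measure_mono fun σ hσ => ⟨hσ.1.1, hσ.2⟩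
        _ = a := by simp [ha]
  · calc min (ENNReal.ofReal t) a = volume (Ioo 0 (min t a.toReal)) := by
          rw [Real.volume_Ioo, sub_zero, ENNReal.ofReal_min, ENNReal.ofReal_toReal ha]
      _ ≤ volume (Ioc 0 t ∩ Iio a.toReal) :=
          measure_mono fun σ hσ =>
            ⟨⟨hσ.1, hσ.2.le.trans (min_le_left _ _)⟩, hσ.2.trans_le (min_le_right _ _)⟩

noncomputable def levelCount (D : ℕ → ℝ≥0∞) (σ : ℝ) : ℝ≥0∞ :=
  {k | ENNReal.ofReal σ < D k}.encard

theorem levelCount_eq_tsum (D : ℕ → ℝ≥0∞) (σ : ℝ) :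
    levelCount D σ = ∑' k, {σ | ENNReal.ofReal σ < D k}.indicator 1 σ := by
  rw [levelCount, ← ENNReal.tsum_set_one, tsum_subtype _ fun _ => (1 : ℝ≥0∞)]
  rfl

theorem measurable_levelCount (D : ℕ → ℝ≥0∞) : Measurable (levelCount D) := by
  simp_rw [funext (levelCount_eq_tsum D)]
  exact .tsum fun k =>
    measurable_const.indicator (measurableSet_lt ENNReal.measurable_ofReal measurable_const)

theorem lintegral_levelCount (D : ℕ → ℝ≥0∞) (t : ℝ) :
    ∫⁻ σ in Ioc 0 t, levelCount D σ = ∑' k, min (ENNReal.ofReal t) (D k) := by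
  have hmeas (k : ℕ) : MeasurableSet {σ : ℝ | ENNReal.ofReal σ < D k} :=
    measurableSet_lt ENNReal.measurable_ofReal measurable_const
  simp_rw [levelCount_eq_tsum]
  rw [lintegral_tsum fun k => (measurable_one.indicator (hmeas k)).aemeasurable]
  congr 1; ext k
  rw [lintegral_indicator_one (hmeas k), Measure.restrict_apply (hmeas k), inter_comm,
    Real.volume_Ioc_inter_setOf_ofReal_lt]

def distribution {X : Type*} [MeasurableSpace X] (ν : Measure X) (f : X → ℝ) (s : ℝ) :
    ℝ≥0∞ :=
  ν {u | s < |f u|}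

section Rearrangement

variable {X : Type*} [MeasurableSpace X] (ν : Measure X) (f : X → ℝ)

theorem distribution_antitone : Antitone (distribution ν f) :=
  fun _ _ hst => measure_mono fun _ hu => hst.trans_lt hu

theorem mu_le_ofReal {s t : ℝ} (hs : 0 ≤ s) (h : distribution ν f s ≤ ENNReal.ofReal t) :
    mu ν f t ≤ ENNReal.ofReal s :=
  sInf_le ⟨s, ⟨hs, h⟩, rfl⟩

theorem ofReal_le_mu {s t : ℝ} (h : ENNReal.ofReal t < distribution ν f s) :
    ENNReal.ofReal s ≤ mu ν f t := by
  refine le_sInf ?_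
  rintro _ ⟨s', ⟨-, hs'⟩, rfl⟩
  refine ENNReal.ofReal_le_ofReal (le_of_not_gt fun hlt => ?_)
  exact (h.trans_le ((distribution_antitone ν f hlt.le).trans hs')).false

theorem le_mu_of_forall {a : ℝ≥0∞} {t : ℝ}
    (h : ∀ s, 0 ≤ s → distribution ν f s ≤ ENNReal.ofReal t → a ≤ ENNReal.ofReal s) :
    a ≤ mu ν f t :=
  le_sInf fun _ ⟨s, ⟨hs, hst⟩, hsa⟩ => hsa ▸ h s hs hst

theorem mu_le_of_forall_lt {b : ℝ≥0∞} {t : ℝ}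
    (h : ∀ r, 0 ≤ r → b < ENNReal.ofReal r → distribution ν f r ≤ ENNReal.ofReal t) :
    mu ν f t ≤ b := by
  by_contra! hlt
  obtain ⟨r, hr, hbr, hrμ⟩ := ENNReal.lt_iff_exists_real_btwn.mp hlt
  exact hrμ.not_ge (mu_le_ofReal ν f hr (h r hr hbr))

theorem isLowerSet_setOf_lt_distribution {s : ℝ} (hs : 0 ≤ s) (x : ℝ≥0∞) :
    IsLowerSet {k : ℕ | x < distribution ν f ((k + 1) * s)} := fun _ _ hjk hk =>
  hk.trans_le (distribution_antitone ν f (by gcongr))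

theorem mu_le_ofReal_mul_levelCount_add_one {s σ : ℝ} (hs : 0 ≤ s)
    (hfin : {k : ℕ | ENNReal.ofReal σ < distribution ν f ((k + 1) * s)}.Finite) :
    mu ν f σ ≤
      ENNReal.ofReal s * (levelCount (fun k => distribution ν f ((k + 1) * s)) σ + 1) := by
  set n := {k : ℕ | ENNReal.ofReal σ < distribution ν f ((k + 1) * s)}.ncard
  have hn : n ∉ {k : ℕ | ENNReal.ofReal σ < distribution ν f ((k + 1) * s)} := by
    rw [(isLowerSet_setOf_lt_distribution ν f hs _).mem_iff_lt_encard, ← hfin.cast_ncard_eq]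
    exact lt_irrefl _
  calc mu ν f σ ≤ ENNReal.ofReal ((n + 1) * s) :=
        mu_le_ofReal ν f (by positivity) (not_lt.mp hn)
    _ = ENNReal.ofReal s * (levelCount (fun k => distribution ν f ((k + 1) * s)) σ + 1) := by
      rw [levelCount, ← hfin.cast_ncard_eq, ENat.toENNReal_coe,
        ENNReal.ofReal_mul (by positivity), mul_comm,
        ENNReal.ofReal_add (by positivity) zero_le_one, ofReal_natCast, ofReal_one]

theorem ofReal_mul_levelCount_le_mu {r σ : ℝ} (hr : 0 ≤ r) :
    ENNReal.ofReal r * levelCount (fun k => distribution ν f ((k + 1) * r)) σ ≤ mu ν f σ := by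
  set S := {k : ℕ | ENNReal.ofReal σ < distribution ν f ((k + 1) * r)} with hS_def
  have hS : IsLowerSet S := isLowerSet_setOf_lt_distribution ν f hr _
  have hnat (n : ℕ) (hn : (n : ℕ∞) ≤ S.encard) : ENNReal.ofReal r * n ≤ mu ν f σ := by
    rcases n with _ | m
    · simp
    have hm : m ∈ S :=
      hS.mem_iff_lt_encard.mpr ((ENat.natCast_lt_natCast.mpr m.lt_succ_self).trans_le hn)
    calc ENNReal.ofReal r * ↑(m + 1) = ENNReal.ofReal ((m + 1) * r) := by
          rw [ENNReal.ofReal_mul (by positivity), mul_comm]; norm_cast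
      _ ≤ mu ν f σ := ofReal_le_mu ν f hm
  rw [levelCount, ← hS_def]
  induction h : S.encard using ENat.recTopCoe with
  | top =>
    rw [ENat.toENNReal_top, ← ENNReal.iSup_natCast, ENNReal.mul_iSup]
    exact iSup_le fun n => hnat n (h ▸ le_top)
  | coe n => exact hnat n h.ge

theorem lintegral_mu_le_of_tsum_distribution_le {s t : ℝ} (hs : 0 ≤ s)
    (h : ∑' k : ℕ, distribution ν f ((k + 1) * s) ≤ ENNReal.ofReal t) :
    ∫⁻ σ in Ioc 0 t, mu ν f σ ≤ 2 * ENNReal.ofReal s * ENNReal.ofReal t := by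
  set D : ℕ → ℝ≥0∞ := fun k => distribution ν f ((k + 1) * s)
  have hfin (σ : ℝ) (hσ : σ ∈ Ioc 0 t) : {k | ENNReal.ofReal σ < D k}.Finite :=
    (ENNReal.finite_const_le_of_tsum_ne_top (h.trans_lt ofReal_lt_top).ne
      (ENNReal.ofReal_pos.mpr hσ.1).ne').subset fun _ hk => le_of_lt (α := ℝ≥0∞) hk
  calc ∫⁻ σ in Ioc 0 t, mu ν f σ
        ≤ ∫⁻ σ in Ioc 0 t, ENNReal.ofReal s * (levelCount D σ + 1) :=
        setLIntegral_mono' measurableSet_Ioc fun σ hσ =>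
          mu_le_ofReal_mul_levelCount_add_one ν f hs (hfin σ hσ)
    _ = ENNReal.ofReal s * (∑' k, min (ENNReal.ofReal t) (D k) + ENNReal.ofReal t) := by
        rw [lintegral_const_mul _ ((measurable_levelCount D).add_const 1),
          lintegral_add_right _ measurable_const, lintegral_levelCount, setLIntegral_const,
          one_mul, Real.volume_Ioc, sub_zero]
    _ ≤ ENNReal.ofReal s * (ENNReal.ofReal t + ENNReal.ofReal t) := by
        gcongr
        exact (ENNReal.tsum_le_tsum fun k => min_le_right _ _).trans h
    _ = 2 * ENNReal.ofReal s * ENNReal.ofReal t := by ring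

theorem tsum_distribution_le_of_lintegral_mu_lt {r t : ℝ} (hr : 0 ≤ r)
    (h : ∫⁻ σ in Ioc 0 t, mu ν f σ < ENNReal.ofReal r * ENNReal.ofReal t) :
    ∑' k : ℕ, distribution ν f ((k + 1) * r) ≤ ENNReal.ofReal t := by
  set D : ℕ → ℝ≥0∞ := fun k => distribution ν f ((k + 1) * r)
  by_contra! hlt
  refine h.not_ge ?_
  calc ENNReal.ofReal r * ENNReal.ofReal t
      = ENNReal.ofReal r * min (ENNReal.ofReal t) (∑' k, D k) := by rw [min_eq_left hlt.le]
    _ ≤ ENNReal.ofReal r * ∑' k, min (ENNReal.ofReal t) (D k) := by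
        gcongr; exact ENNReal.min_tsum_le_tsum_min _ _
    _ = ∫⁻ σ in Ioc 0 t, ENNReal.ofReal r * levelCount D σ := by
        rw [lintegral_const_mul _ (measurable_levelCount D), lintegral_levelCount]
    _ ≤ ∫⁻ σ in Ioc 0 t, mu ν f σ :=
        lintegral_mono fun σ => ofReal_mul_levelCount_le_mu ν f hr

theorem distribution_prod_count_div (hf : Measurable f) (s : ℝ) :
    distribution (ν.prod (Measure.count : Measure {k : ℕ // 0 < k}))
        (fun p => f p.1 / ((p.2 : ℕ) : ℝ)) s =
      ∑' k : ℕ, distribution ν f ((k + 1) * s) := by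
  have hmeas : Measurable fun p : X × {k : ℕ // 0 < k} => f p.1 / ((p.2 : ℕ) : ℝ) :=
    (hf.comp measurable_fst).div
      ((measurable_of_countable fun k : {k : ℕ // 0 < k} => ((k : ℕ) : ℝ)).comp
        measurable_snd)
  rw [distribution, Measure.prod_count_apply ν (measurableSet_lt measurable_const hmeas.abs)]
  refine (tsum_pnat_eq_tsum_succ (f := fun n : ℕ => ν {u | s < |f u / n|})).trans ?_
  congr 1; ext k
  have hk : (0 : ℝ) < (k : ℝ) + 1 := by positivity
  simp only [distribution, Nat.cast_add, Nat.cast_one, abs_div, abs_of_pos hk, lt_div_iff₀ hk,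
    mul_comm]

end Rearrangement

theorem stmt_15_general {X : Type*} [MeasurableSpace X] (ν : Measure X)
    (f : X → ℝ) (hf : Measurable f) :
    ∀ t : ℝ, 0 < t →
      2⁻¹ * ((∫⁻ s in Ioc (0:ℝ) t, mu ν f s) / ENNReal.ofReal t) ≤
        mu (ν.prod (Measure.count : Measure {k : ℕ // 0 < k}))
          (fun p : X × {k : ℕ // 0 < k} => f p.1 / ((p.2 : ℕ) : ℝ)) t ∧
      mu (ν.prod (Measure.count : Measure {k : ℕ // 0 < k}))
          (fun p : X × {k : ℕ // 0 < k} => f p.1 / ((p.2 : ℕ) : ℝ)) t ≤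
        (∫⁻ s in Ioc (0:ℝ) t, mu ν f s) / ENNReal.ofReal t := by
  intro t ht
  have hdist := distribution_prod_count_div ν f hf
  refine ⟨le_mu_of_forall _ _ fun s hs hst => ?_, mu_le_of_forall_lt _ _ fun r hr hrI => ?_⟩
  · have hI := lintegral_mu_le_of_tsum_distribution_le ν f hs ((hdist s).symm.trans_le hst)
    calc 2⁻¹ * ((∫⁻ σ in Ioc 0 t, mu ν f σ) / ENNReal.ofReal t)
        ≤ 2⁻¹ * (2 * ENNReal.ofReal s) := by gcongr; exact ENNReal.div_le_of_le_mul hI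
      _ = ENNReal.ofReal s := ENNReal.inv_mul_cancel_left (by norm_num) (by norm_num)
  · rw [hdist]
    refine tsum_distribution_le_of_lintegral_mu_lt ν f hr ?_
    exact (ENNReal.div_lt_iff (.inl (ENNReal.ofReal_pos.mpr ht).ne') (.inl ofReal_ne_top)).mp hrI

/-- Commutative case of Lemma 6.3: for `f ∈ (L₁+L∞)(X,ν)` and
`F(u,k) = f(u)/k` on the product of `(X,ν)` with the positive integers with counting
measure, one has `(1/2) Cμ(f) ≤ μ(F) ≤ Cμ(f)` pointwise. -/
theorem stmt_15 {X : Type*} [MeasurableSpace X] (ν : Measure X) [SigmaFinite ν]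
    (f : X → ℝ) (hf : Measurable f)
    (hL1Linf : (∫⁻ s in Ioc (0:ℝ) 1, mu ν f s) ≠ ⊤) :
    ∀ t : ℝ, 0 < t →
      2⁻¹ * ((∫⁻ s in Ioc (0:ℝ) t, mu ν f s) / ENNReal.ofReal t) ≤
        mu (ν.prod (Measure.count : Measure {k : ℕ // 0 < k}))
          (fun p : X × {k : ℕ // 0 < k} => f p.1 / ((p.2 : ℕ) : ℝ)) t ∧
      mu (ν.prod (Measure.count : Measure {k : ℕ // 0 < k}))
          (fun p : X × {k : ℕ // 0 < k} => f p.1 / ((p.2 : ℕ) : ℝ)) t ≤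
        (∫⁻ s in Ioc (0:ℝ) t, mu ν f s) / ENNReal.ofReal t :=
  stmt_15_general ν f hf
end

section
/- Let Φ be an Orlicz function. Then for every measurable function x : (0,∞) → ℝ, ‖Cx‖_{Φ,∞} ≤ 2 ‖x‖_Φ, where (Cx)(t) = (1/t) ∫_0^t x(s) ds; that is, the Cesàro operator C maps the Orlicz space L_Φ(0,∞) boundedly into the weak Orlicz space L_{Φ,∞}(0,∞) with norm at most 2. -/
open MeasureTheory ENNReal Set

/-- An Orlicz function: continuous, convex and increasing on `[0,∞)`, with `Φ(0) = 0` and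
`Φ(t) → ∞` as `t → ∞`. -/
def IsOrliczFunction (Φ : ℝ → ℝ) : Prop :=
  Continuous Φ ∧ ConvexOn ℝ (Ici 0) Φ ∧ MonotoneOn Φ (Ici 0) ∧ Φ 0 = 0 ∧
    Filter.Tendsto Φ Filter.atTop Filter.atTop

/-- The Luxemburg norm `‖x‖_Φ = inf {λ > 0 : ∫_0^∞ Φ(|x(s)|/λ) ds ≤ 1}` on `(0,∞)`,
with `inf ∅ = ∞`. -/
noncomputable def orliczNorm (Φ : ℝ → ℝ) (x : ℝ → ℝ) : ℝ≥0∞ :=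
  sInf (ENNReal.ofReal ''
    {l : ℝ | 0 < l ∧ (∫⁻ s in Ioi (0:ℝ), ENNReal.ofReal (Φ (|x s| / l))) ≤ 1})

/-- The weak Orlicz quasi-norm
`‖x‖_{Φ,∞} = inf {c > 0 : ∀ λ > 0, Φ(λ) |{s ∈ (0,∞) : |x(s)| > cλ}| ≤ 1}`, with `inf ∅ = ∞`. -/
noncomputable def weakOrliczNorm (Φ : ℝ → ℝ) (x : ℝ → ℝ) : ℝ≥0∞ :=
  sInf (ENNReal.ofReal ''
    {c : ℝ | 0 < c ∧ ∀ l : ℝ, 0 < l →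
      ENNReal.ofReal (Φ l) * volume {s : ℝ | s ∈ Ioi 0 ∧ c * l < |x s|} ≤ 1})

/-!
Jensen's inequality on `(0, t]` does all the work. If `∫ Φ(|x|/l) ≤ 1` and `|Cx(t)| > l r`, then
`t Φ(r) ≤ t Φ(⨍_{(0,t]} |x|/l) ≤ ∫_0^t Φ(|x|/l) ≤ 1`, so the level set `{|Cx| > l r}` lies in
`(0, 1/Φ(r)]`. Hence every admissible `l` for the Luxemburg norm of `x` is admissible for the weak
norm of `Cx`, which gives the bound even with constant `1`.
-/

noncomputable def cesaro (x : ℝ → ℝ) (t : ℝ) : ℝ :=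
  (∫ s in Ioc (0:ℝ) t, x s) / t

namespace IsOrliczFunction

variable {Φ : ℝ → ℝ}

theorem nonneg (hΦ : IsOrliczFunction Φ) {a : ℝ} (ha : 0 ≤ a) : 0 ≤ Φ a := by
  simpa only [hΦ.2.2.2.1] using hΦ.2.2.1 self_mem_Ici ha ha

theorem ofReal_map_abs_average_mul_le {α : Type*} [MeasurableSpace α] {μ : Measure α}
    [IsFiniteMeasure μ] (hΦ : IsOrliczFunction Φ) {f : α → ℝ} (hf : Integrable f μ) :
    ENNReal.ofReal (Φ |⨍ a, f a ∂μ|) * μ univ ≤ ∫⁻ a, ENNReal.ofReal (Φ |f a|) ∂μ := by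
  rcases eq_zero_or_neZero μ with rfl | _
  · simp
  have hΦ_nonneg : 0 ≤ Φ |⨍ a, f a ∂μ| := hΦ.nonneg (abs_nonneg _)
  set g : α → ℝ := fun a => Φ |f a|
  have hg_nonneg : ∀ a, 0 ≤ g a := fun a => hΦ.nonneg (abs_nonneg _)
  obtain ⟨hcont, hconv, hmono, -, -⟩ := hΦ
  have hgm : AEStronglyMeasurable g μ := hcont.comp_aestronglyMeasurable hf.abs.1
  by_cases hfin : ∫⁻ a, ENNReal.ofReal (g a) ∂μ = ∞
  · exact hfin ▸ le_top
  have hgi : Integrable g μ :=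
    (lintegral_ofReal_ne_top_iff_integrable hgm (ae_of_all _ hg_nonneg)).1 hfin
  have habs : |⨍ a, f a ∂μ| ≤ ⨍ a, |f a| ∂μ := by
    simpa only [average_eq, smul_eq_mul, abs_mul, abs_inv, abs_of_nonneg measureReal_nonneg]
      using mul_le_mul_of_nonneg_left (abs_integral_le_integral_abs (f := f) (μ := μ))
        (inv_nonneg.2 (measureReal_nonneg (μ := μ) (s := univ)))
  have hjensen : Φ |⨍ a, f a ∂μ| ≤ ⨍ a, g a ∂μ :=
    (hmono (mem_Ici.2 (abs_nonneg _)) (mem_Ici.2 ((abs_nonneg _).trans habs)) habs).trans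
      (hconv.map_average_le hcont.continuousOn isClosed_Ici (ae_of_all _ fun a => abs_nonneg (f a))
        hf.abs hgi)
  calc ENNReal.ofReal (Φ |⨍ a, f a ∂μ|) * μ univ
      = ENNReal.ofReal (Φ |⨍ a, f a ∂μ| * μ.real univ) := by
        rw [ENNReal.ofReal_mul hΦ_nonneg, ofReal_measureReal]
    _ ≤ ENNReal.ofReal (μ.real univ • ⨍ a, g a ∂μ) := by
        rw [smul_eq_mul, mul_comm]
        exact ENNReal.ofReal_le_ofReal (mul_le_mul_of_nonneg_left hjensen measureReal_nonneg)
    _ = ∫⁻ a, ENNReal.ofReal (g a) ∂μ := by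
        rw [measure_smul_average, ofReal_integral_eq_lintegral_ofReal hgi (ae_of_all _ hg_nonneg)]

theorem ofReal_mul_le_lintegral_of_lt_abs_cesaro (hΦ : IsOrliczFunction Φ) {x : ℝ → ℝ}
    {l r t : ℝ} (hl : 0 < l) (hr : 0 ≤ r) (ht : 0 < t) (hlt : l * r < |cesaro x t|) :
    ENNReal.ofReal (Φ r) * ENNReal.ofReal t ≤
      ∫⁻ s in Ioc 0 t, ENNReal.ofReal (Φ (|x s| / l)) := by
  have hxi : IntegrableOn x (Ioc 0 t) := by
    -- otherwise the Bochner integral is `0`, hence so is `cesaro x t`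
    by_contra h
    rw [cesaro, integral_undef h, zero_div, abs_zero] at hlt
    nlinarith
  have havg : |⨍ s in Ioc 0 t, x s / l| = |cesaro x t| / l := by
    rw [setAverage_eq, Real.volume_real_Ioc_of_le ht.le, sub_zero, integral_div, cesaro,
      smul_eq_mul, abs_mul, abs_div, abs_div, abs_inv, abs_of_pos ht, abs_of_pos hl]
    ring
  have hΦr : Φ r ≤ Φ |⨍ s in Ioc 0 t, x s / l| := by
    rw [havg]
    exact hΦ.2.2.1 (mem_Ici.2 hr) (mem_Ici.2 (by positivity)) ((le_div_iff₀' hl).2 hlt.le)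
  calc ENNReal.ofReal (Φ r) * ENNReal.ofReal t
      ≤ ENNReal.ofReal (Φ |⨍ s in Ioc 0 t, x s / l|) * volume.restrict (Ioc 0 t) univ := by
        rw [Measure.restrict_apply_univ, Real.volume_Ioc, sub_zero]
        gcongr
    _ ≤ ∫⁻ s in Ioc 0 t, ENNReal.ofReal (Φ |x s / l|) :=
        haveI : IsFiniteMeasure (volume.restrict (Ioc (0:ℝ) t)) := isFiniteMeasure_restrict.2
          measure_Ioc_lt_top.ne
        hΦ.ofReal_map_abs_average_mul_le (hxi.div_const l)
    _ = ∫⁻ s in Ioc 0 t, ENNReal.ofReal (Φ (|x s| / l)) := by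
        simp only [abs_div, abs_of_pos hl]

theorem ofReal_mul_volume_lt_abs_cesaro_le_one (hΦ : IsOrliczFunction Φ) {x : ℝ → ℝ} {l r : ℝ}
    (hl : 0 < l) (hx : ∫⁻ s in Ioi 0, ENNReal.ofReal (Φ (|x s| / l)) ≤ 1) (hr : 0 < r) :
    ENNReal.ofReal (Φ r) * volume {s : ℝ | s ∈ Ioi 0 ∧ l * r < |cesaro x s|} ≤ 1 := by
  rcases (hΦ.nonneg hr.le).eq_or_lt with hΦr | hΦr
  · simp [← hΦr]
  have hsub : {s : ℝ | s ∈ Ioi 0 ∧ l * r < |cesaro x s|} ⊆ Ioc 0 (Φ r)⁻¹ := by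
    rintro t ⟨ht, hlt⟩
    have hle : ENNReal.ofReal (Φ r) * ENNReal.ofReal t ≤ 1 :=
      (hΦ.ofReal_mul_le_lintegral_of_lt_abs_cesaro hl hr.le ht hlt).trans
        ((lintegral_mono_set Ioc_subset_Ioi_self).trans hx)
    rw [← ENNReal.ofReal_mul hΦr.le, ENNReal.ofReal_le_one] at hle
    exact ⟨ht, by simpa using (le_inv_mul_iff₀ hΦr).2 hle⟩
  calc ENNReal.ofReal (Φ r) * volume {s : ℝ | s ∈ Ioi 0 ∧ l * r < |cesaro x s|}
      ≤ ENNReal.ofReal (Φ r) * ENNReal.ofReal (Φ r)⁻¹ := by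
        rw [← sub_zero (Φ r)⁻¹, ← Real.volume_Ioc]
        gcongr
    _ = 1 := by
        rw [← ENNReal.ofReal_mul hΦr.le, mul_inv_cancel₀ hΦr.ne', ENNReal.ofReal_one]

theorem weakOrliczNorm_cesaro_le (hΦ : IsOrliczFunction Φ) (x : ℝ → ℝ) :
    weakOrliczNorm Φ (cesaro x) ≤ orliczNorm Φ x :=
  sInf_le_sInf <| image_mono fun _ ⟨hl, hx⟩ =>
    ⟨hl, fun _ hr => hΦ.ofReal_mul_volume_lt_abs_cesaro_le_one hl hx hr⟩

end IsOrliczFunction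

theorem stmt_16_general (Φ : ℝ → ℝ) (hΦ : IsOrliczFunction Φ) (x : ℝ → ℝ) :
    weakOrliczNorm Φ (fun t => (∫ s in Ioc (0:ℝ) t, x s) / t) ≤ 2 * orliczNorm Φ x :=
  (hΦ.weakOrliczNorm_cesaro_le x).trans (le_mul_of_one_le_left' one_le_two)

/-- For every Orlicz function `Φ` and every measurable `x : (0,∞) → ℝ`,
`‖Cx‖_{Φ,∞} ≤ 2 ‖x‖_Φ`, where `(Cx)(t) = (1/t) ∫_0^t x(s) ds`. -/
theorem stmt_16 (Φ : ℝ → ℝ) (hΦ : IsOrliczFunction Φ) (x : ℝ → ℝ) (hx : Measurable x) :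
    weakOrliczNorm Φ (fun t => (∫ s in Ioc (0:ℝ) t, x s) / t) ≤ 2 * orliczNorm Φ x :=
  stmt_16_general Φ hΦ x
end
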